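/- arXiv:1110.3939 — 2 statements merged into one kernel-verified Lean document; each statement's English description precedes it below -/
import Mathlib

section
/- Any irreducible family ℱ of subsets of a finite set F satisfying axioms A1–A5 is either a string of sausages over F or a fat sausage over F. -/
variable {α : Type*}

/-- `r` is a strict linear order (complete, transitive, antisymmetric) on the set `C`. -/
def IsLinOn (C : Set α) (r : α → α → Prop) : Prop :=
  (∀ a ∈ C, ¬r a a) ∧
    (∀ a ∈ C, ∀ b ∈ C, ∀ c ∈ C, r a b → r b c → r a c) ∧
      ∀ a ∈ C, ∀ b ∈ C, a ≠ b → r a b ∨ r b a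

/-- A preference profile over `C`: a (nonempty) finite tuple of linear orders on `C`. -/
def IsProfile (C : Set α) {n : ℕ} (R : Fin n → α → α → Prop) : Prop :=
  0 < n ∧ ∀ i, IsLinOn C (R i)

/-- `X` is a clone set for the profile `R` over `C`. -/
def IsCloneSet (C : Set α) {n : ℕ} (R : Fin n → α → α → Prop) (X : Set α) : Prop :=
  X.Nonempty ∧ X ⊆ C ∧
    ∀ c ∈ X, ∀ c' ∈ X, ∀ a ∈ C \ X, ∀ i, (R i c a ↔ R i c' a)

/-- The clone structure of `R`: the family of all clone sets. -/
def cloneSets (C : Set α) {n : ℕ} (R : Fin n → α → α → Prop) : Set (Set α) :=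
  {X | IsCloneSet C R X}

/-- `X` and `Y` intersect non-trivially. -/
def Bowtie (X Y : Set α) : Prop :=
  (X ∩ Y).Nonempty ∧ (X \ Y).Nonempty ∧ (Y \ X).Nonempty

/-- `Z` is a proper minimal superset of `X` in the family `𝓕`. -/
def IsProperMinimalSuperset (𝓕 : Set (Set α)) (X Z : Set α) : Prop :=
  Z ∈ 𝓕 ∧ X ⊆ Z ∧ X ≠ Z ∧ ∀ Y ∈ 𝓕, X ⊆ Y → Y ⊆ Z → Y = X ∨ Y = Z

/-- The family `𝓕` contains a bicycle chain. -/
def HasBicycleChain (𝓕 : Set (Set α)) : Prop :=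
  ∃ (k : ℕ) (A : ZMod k → Set α), 3 ≤ k ∧ (∀ i, A i ∈ 𝓕) ∧
    ∀ i : ZMod k,
      Bowtie (A (i - 1)) (A i) ∧ A (i - 1) ∩ A i ∩ A (i + 1) = ∅ ∧
        A i ⊆ A (i - 1) ∪ A (i + 1)

/-- A family `𝓕` of subsets of `F` satisfies axioms A1–A5. -/
def SatisfiesAxioms (F : Set α) (𝓕 : Set (Set α)) : Prop :=
  (∀ X ∈ 𝓕, X ⊆ F) ∧
    ((∀ f ∈ F, ({f} : Set α) ∈ 𝓕) ∧ (∅ : Set α) ∉ 𝓕 ∧ F ∈ 𝓕) ∧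
    (∀ C₁ ∈ 𝓕, ∀ C₂ ∈ 𝓕, (C₁ ∩ C₂).Nonempty → C₁ ∪ C₂ ∈ 𝓕 ∧ C₁ ∩ C₂ ∈ 𝓕) ∧
    (∀ C₁ ∈ 𝓕, ∀ C₂ ∈ 𝓕, Bowtie C₁ C₂ → C₁ \ C₂ ∈ 𝓕 ∧ C₂ \ C₁ ∈ 𝓕) ∧
    (∀ X ∈ 𝓕, {Z | IsProperMinimalSuperset 𝓕 X Z}.encard ≤ 2) ∧
    ¬HasBicycleChain 𝓕

/-- `Y` is a proper subset of `Z`: `Y ⊆ Z` and `1 < |Y| < |Z|`. -/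
def IsProperSubsetOf (Y Z : Set α) : Prop :=
  Y ⊆ Z ∧ 1 < Y.ncard ∧ Y.ncard < Z.ncard

/-- `𝓔` is a subfamily of `𝓕` with support `E`. -/
def IsSubfamilyWithSupport (𝓕 𝓔 : Set (Set α)) (E : Set α) : Prop :=
  E ∈ 𝓕 ∧ 𝓔 = {X ∈ 𝓕 | X ⊆ E} ∧ ∀ X ∈ 𝓕, X ∉ 𝓔 → E ⊆ X ∨ X ∩ E = ∅

/-- The family `𝓕` over ground set `F` has no proper subfamilies. -/
def IrreducibleFamily (F : Set α) (𝓕 : Set (Set α)) : Prop :=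
  ¬∃ (𝓔 : Set (Set α)) (E : Set α),
      IsSubfamilyWithSupport 𝓕 𝓔 E ∧ IsProperSubsetOf E F

/-- `𝓕` is a string of sausages over `F`: the family of all intervals of some
enumeration of `F`. -/
def IsStringOfSausages (F : Set α) (𝓕 : Set (Set α)) : Prop :=
  ∃ (m : ℕ) (f : Fin m → α), Function.Injective f ∧ Set.range f = F ∧
    𝓕 = {S | ∃ i j : Fin m, i ≤ j ∧ S = f '' Set.Icc i j}

/-- `𝓕` is a fat sausage over `F`: the whole set together with all singletons. -/
def IsFatSausage (F : Set α) (𝓕 : Set (Set α)) : Prop :=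
  𝓕 = ({F} : Set (Set α)) ∪ {S | ∃ x ∈ F, S = ({x} : Set α)}

/-!
The two-element members of `𝓕` form a graph of maximum degree two (A4: a singleton `{x}` has at
most two proper minimal supersets), and along a path `s 0, …, s (k - 1)` in this graph all
intervals `s '' Icc i j` are members (A2). A member inside the vertex set of a path is an interval
of it, for otherwise two separated intervals and their gap give a bicycle chain of length three
(A5). A longest path extending a given one is closed: its vertex set `S` is a connected component
of the graph.

In an irreducible family no member `X` crosses (`⋈`) such an `S`. For a smallest such `X`, the
interval `X ∩ S` is an end of the path (an inner interval would have three proper minimal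
supersets), and a single vertex `e` by minimality. The member `X \ S` (A3) then is not a single
point, as `S` is closed, so by irreducibility it contains a pair; the closed path `T` through that
pair is disjoint from `S`, and either `X` crosses `T` in two points, or `T ⊆ X` forces `X ⊆ T`.

Irreducibility also makes every member `E` with `1 < |E| < |F|` crossed by another member, so that
`E` contains a pair. If there is no such `E`, the family is a fat sausage; otherwise the closed path
through that pair covers `F`, and the family consists of its intervals: a string of sausages.
-/

open Set

section

variable {F : Set α} {𝓕 : Set (Set α)} {k : ℕ} {s : ℕ → α}

theorem Bowtie.symm {X Y : Set α} (h : Bowtie X Y) : Bowtie Y X :=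
  ⟨inter_comm X Y ▸ h.1, h.2.2, h.2.1⟩

theorem Bowtie.image {β : Type*} {f : β → α} {U A B : Set β} (hf : InjOn f U) (hA : A ⊆ U)
    (hB : B ⊆ U) (h : Bowtie A B) : Bowtie (f '' A) (f '' B) := by
  have image_diff {A B : Set β} (hA : A ⊆ U) (hB : B ⊆ U) (h : (A \ B).Nonempty) :
      (f '' A \ f '' B).Nonempty := by
    obtain ⟨x, hxA, hxB⟩ := h
    exact ⟨f x, mem_image_of_mem f hxA, fun hx => hxB ((hf.mem_image_iff hB (hA hxA)).1 hx)⟩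
  exact ⟨hf.image_inter hA hB ▸ h.1.image f, image_diff hA hB h.2.1, image_diff hB hA h.2.2⟩

theorem hasBicycleChain_of_three {A₀ A₁ A₂ : Set α} (h₀ : A₀ ∈ 𝓕) (h₁ : A₁ ∈ 𝓕) (h₂ : A₂ ∈ 𝓕)
    (h₀₁ : Bowtie A₀ A₁) (h₁₂ : Bowtie A₁ A₂) (h₂₀ : Bowtie A₂ A₀) (hempty : A₀ ∩ A₁ ∩ A₂ = ∅)
    (hcov₀ : A₀ ⊆ A₂ ∪ A₁) (hcov₁ : A₁ ⊆ A₀ ∪ A₂) (hcov₂ : A₂ ⊆ A₁ ∪ A₀) :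
    HasBicycleChain 𝓕 := by
  refine ⟨3, ![A₀, A₁, A₂], le_rfl, ?_, ?_⟩
  · intro i; fin_cases i <;> assumption
  · have h₁₂₀ : A₁ ∩ A₂ ∩ A₀ = ∅ := by rw [← hempty]; ac_rfl
    have h₂₀₁ : A₂ ∩ A₀ ∩ A₁ = ∅ := by rw [← hempty]; ac_rfl
    intro i; fin_cases i
    exacts [⟨h₂₀, h₂₀₁, hcov₀⟩, ⟨h₀₁, hempty, hcov₁⟩, ⟨h₁₂, h₁₂₀, hcov₂⟩]

theorem isProperMinimalSuperset_singleton_pair {x y : α} (hxy : x ≠ y) (h : ({x, y} : Set α) ∈ 𝓕) :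
    IsProperMinimalSuperset 𝓕 {x} {x, y} := by
  refine ⟨h, by simp, fun h' => hxy ?_, fun Y _ hxY hYxy => ?_⟩
  · exact (mem_singleton_iff.1 (h'.symm ▸ mem_insert_of_mem x rfl)).symm
  · rcases subset_pair_iff_eq.1 hYxy with rfl | rfl | rfl | rfl
    · exact absurd (hxY rfl) (notMem_empty x)
    · exact Or.inl rfl
    · exact absurd (hxY rfl) hxy
    · exact Or.inr rfl

theorem exists_isProperMinimalSuperset_subset {X W : Set α} (hW : W ∈ 𝓕)
    (hWfin : W.Finite) (hXW : X ⊂ W) : ∃ Z, IsProperMinimalSuperset 𝓕 X Z ∧ Z ⊆ W := by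
  let S := {Z ∈ 𝓕 | X ⊂ Z ∧ Z ⊆ W}
  have hSfin : S.Finite := hWfin.finite_subsets.subset fun Z hZ => hZ.2.2
  obtain ⟨Z, ⟨hZ, hXZ, hZW⟩, hmin⟩ := hSfin.exists_minimal ⟨W, hW, hXW, subset_rfl⟩
  refine ⟨Z, ⟨hZ, hXZ.1, hXZ.ne, fun Y hY hXY hYZ => ?_⟩, hZW⟩
  by_cases hYX : Y = X
  · exact Or.inl hYX
  · exact Or.inr (hYZ.antisymm (hmin ⟨hY, hXY.ssubset_of_ne (Ne.symm hYX), hYZ.trans hZW⟩ hYZ))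

theorem exists_eq_image_Icc_of_forall_mem {Y : Set α} (hY : Y.Nonempty) (hYs : Y ⊆ s '' Iio k)
    (hconn : ∀ p q r, p ≤ q → q ≤ r → r < k → s p ∈ Y → s r ∈ Y → s q ∈ Y) :
    ∃ i j, i ≤ j ∧ j < k ∧ Y = s '' Icc i j := by
  let I := {t | t < k ∧ s t ∈ Y}
  have hI : I.Nonempty := by
    obtain ⟨_, hy⟩ := hY
    obtain ⟨t, ht, rfl⟩ := hYs hy
    exact ⟨t, ht, hy⟩
  have hbdd : BddAbove I := ⟨k, fun t ht => ht.1.le⟩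
  have hi := Nat.sInf_mem hI
  have hl := Nat.sSup_mem hI hbdd
  refine ⟨sInf I, sSup I, Nat.sInf_le hl, hl.1, Subset.antisymm (fun y hy => ?_) ?_⟩
  · obtain ⟨t, ht, rfl⟩ := hYs hy
    exact ⟨t, ⟨Nat.sInf_le ⟨ht, hy⟩, le_csSup hbdd ⟨ht, hy⟩⟩, rfl⟩
  · rintro _ ⟨t, ht, rfl⟩
    exact hconn _ t _ ht.1 ht.2 hl.1 hi.2 hl.2

namespace SatisfiesAxioms

theorem subset (hax : SatisfiesAxioms F 𝓕) {X : Set α} (hX : X ∈ 𝓕) : X ⊆ F :=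
  hax.1 X hX

theorem singleton_mem (hax : SatisfiesAxioms F 𝓕) {x : α} (hx : x ∈ F) : {x} ∈ 𝓕 :=
  hax.2.1.1 x hx

theorem ground_mem (hax : SatisfiesAxioms F 𝓕) : F ∈ 𝓕 :=
  hax.2.1.2.2

theorem nonempty (hax : SatisfiesAxioms F 𝓕) {X : Set α} (hX : X ∈ 𝓕) : X.Nonempty :=
  nonempty_iff_ne_empty.2 fun h => hax.2.1.2.1 (h ▸ hX)

theorem union_mem (hax : SatisfiesAxioms F 𝓕) {X Y : Set α} (hX : X ∈ 𝓕) (hY : Y ∈ 𝓕)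
    (h : (X ∩ Y).Nonempty) : X ∪ Y ∈ 𝓕 :=
  (hax.2.2.1 X hX Y hY h).1

theorem inter_mem (hax : SatisfiesAxioms F 𝓕) {X Y : Set α} (hX : X ∈ 𝓕) (hY : Y ∈ 𝓕)
    (h : (X ∩ Y).Nonempty) : X ∩ Y ∈ 𝓕 :=
  (hax.2.2.1 X hX Y hY h).2

theorem diff_mem (hax : SatisfiesAxioms F 𝓕) {X Y : Set α} (hX : X ∈ 𝓕) (hY : Y ∈ 𝓕)
    (h : Bowtie X Y) : X \ Y ∈ 𝓕 :=
  (hax.2.2.2.1 X hX Y hY h).1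

theorem not_hasBicycleChain (hax : SatisfiesAxioms F 𝓕) : ¬HasBicycleChain 𝓕 :=
  hax.2.2.2.2.2

theorem eq_or_eq_of_isProperMinimalSuperset (hax : SatisfiesAxioms F 𝓕) {X Z₁ Z₂ Z₃ : Set α}
    (hX : X ∈ 𝓕) (h₁ : IsProperMinimalSuperset 𝓕 X Z₁) (h₂ : IsProperMinimalSuperset 𝓕 X Z₂)
    (h₃ : IsProperMinimalSuperset 𝓕 X Z₃) (h₁₂ : Z₁ ≠ Z₂) : Z₃ = Z₁ ∨ Z₃ = Z₂ := by
  by_contra! h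
  have hsub : ({Z₁, Z₂, Z₃} : Set (Set α)) ⊆ {Z | IsProperMinimalSuperset 𝓕 X Z} := by
    rintro Z (rfl | rfl | rfl) <;> assumption
  have hcard : ({Z₁, Z₂, Z₃} : Set (Set α)).encard = 3 := by
    rw [encard_insert_of_notMem (by simp [h₁₂, h.1.symm]), encard_pair h.2.symm]
    rfl
  have := (hcard ▸ encard_le_encard hsub).trans (hax.2.2.2.2.1 X hX)
  norm_num at this

theorem eq_or_eq_of_pair_mem (hax : SatisfiesAxioms F 𝓕) {x a b c : α}
    (ha : ({x, a} : Set α) ∈ 𝓕) (hb : ({x, b} : Set α) ∈ 𝓕) (hc : ({x, c} : Set α) ∈ 𝓕)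
    (hxa : x ≠ a) (hxb : x ≠ b) (hxc : x ≠ c) (hab : a ≠ b) : c = a ∨ c = b := by
  have hx : ({x} : Set α) ∈ 𝓕 := hax.singleton_mem (hax.subset ha (mem_insert x _))
  have pair_eq {u v : α} (hxu : x ≠ u) (h : ({x, u} : Set α) = {x, v}) : u = v := by
    rcases pair_eq_pair_iff.1 h with ⟨-, h⟩ | ⟨-, rfl⟩
    exacts [h, absurd rfl hxu]
  exact (hax.eq_or_eq_of_isProperMinimalSuperset hx (isProperMinimalSuperset_singleton_pair hxa ha)
    (isProperMinimalSuperset_singleton_pair hxb hb) (isProperMinimalSuperset_singleton_pair hxc hc)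
    (fun h => hab (pair_eq hxa h))).imp (pair_eq hxc) (pair_eq hxc)

theorem isFatSausage (hax : SatisfiesAxioms F 𝓕) (hF : F.Finite)
    (h : ∀ X ∈ 𝓕, X.ncard ≤ 1 ∨ X = F) : IsFatSausage F 𝓕 := by
  ext X
  constructor
  · intro hX
    rcases h X hX with h₁ | rfl
    · have hpos := (ncard_pos (hF.subset (hax.subset hX))).2 (hax.nonempty hX)
      obtain ⟨x, rfl⟩ := ncard_eq_one.1 (le_antisymm h₁ hpos)
      exact Or.inr ⟨x, hax.subset hX rfl, rfl⟩
    · exact Or.inl rfl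
  · rintro (rfl | ⟨x, hx, rfl⟩)
    exacts [hax.ground_mem, hax.singleton_mem hx]

end SatisfiesAxioms

namespace IrreducibleFamily

theorem exists_bowtie (hirr : IrreducibleFamily F 𝓕) (hax : SatisfiesAxioms F 𝓕) {E : Set α}
    (hE : E ∈ 𝓕) (h₁ : 1 < E.ncard) (h₂ : E.ncard < F.ncard) : ∃ X ∈ 𝓕, Bowtie X E := by
  by_contra! hcross
  refine hirr ⟨_, E, ⟨hE, rfl, fun X hX hXE => ?_⟩, hax.subset hE, h₁, h₂⟩
  have hXE : ¬X ⊆ E := fun h => hXE ⟨hX, h⟩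
  rcases (X ∩ E).eq_empty_or_nonempty with h | h
  · exact Or.inr h
  · by_contra! hEX
    exact hcross X hX ⟨h, sdiff_nonempty.2 hXE, sdiff_nonempty.2 hEX.1⟩

theorem exists_pair_mem_subset (hirr : IrreducibleFamily F 𝓕) (hF : F.Finite)
    (hax : SatisfiesAxioms F 𝓕) {Y : Set α} (hY : Y ∈ 𝓕) (h₂ : 2 ≤ Y.ncard)
    (hlt : Y.ncard < F.ncard) : ∃ a b, a ≠ b ∧ ({a, b} : Set α) ⊆ Y ∧ ({a, b} : Set α) ∈ 𝓕 := by
  obtain ⟨n, hn⟩ : ∃ n, Y.ncard = n := ⟨_, rfl⟩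
  induction n using Nat.strong_induction_on generalizing Y with
  | _ n ih =>
  rcases h₂.eq_or_lt with h₂ | h₃
  · obtain ⟨a, b, hab, rfl⟩ := ncard_eq_two.1 h₂.symm
    exact ⟨a, b, hab, subset_rfl, hY⟩
  obtain ⟨W, hW, hWY⟩ := hirr.exists_bowtie hax hY (by omega) hlt
  have hYfin : Y.Finite := hF.subset (hax.subset hY)
  have hsplit := ncard_inter_add_ncard_sdiff_eq_ncard Y W hYfin
  have hin := (ncard_pos (hYfin.subset inter_subset_left)).2 (inter_comm W Y ▸ hWY.1)
  have hout := (ncard_pos (hYfin.subset sdiff_subset)).2 hWY.2.2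
  rcases le_or_gt 2 (Y ∩ W).ncard with h | h
  · obtain ⟨a, b, hab, hsub, hmem⟩ := ih _ (by omega)
      (hax.inter_mem hY hW (inter_comm W Y ▸ hWY.1)) h (by omega) rfl
    exact ⟨a, b, hab, hsub.trans inter_subset_left, hmem⟩
  · obtain ⟨a, b, hab, hsub, hmem⟩ := ih _ (by omega)
      (hax.diff_mem hY hW hWY.symm) (by omega) (by omega) rfl
    exact ⟨a, b, hab, hsub.trans sdiff_subset, hmem⟩

end IrreducibleFamily

/-- A path `s 0, …, s (k - 1)` in the graph of two-element members of `𝓕`; the values of `s`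
from `k` on are irrelevant. -/
structure IsPairPath (𝓕 : Set (Set α)) (k : ℕ) (s : ℕ → α) : Prop where
  two_le : 2 ≤ k
  injOn : InjOn s (Iio k)
  pair_mem : ∀ i, i + 1 < k → ({s i, s (i + 1)} : Set α) ∈ 𝓕

theorem isPairPath_pair {a b : α} (hab : a ≠ b) (h : ({a, b} : Set α) ∈ 𝓕) :
    IsPairPath 𝓕 2 (fun n => if n = 0 then a else b) := by
  refine ⟨le_rfl, ?_, fun i hi => ?_⟩
  · intro t ht t' ht' htt'
    simp only [mem_Iio] at ht ht'
    interval_cases t <;> interval_cases t' <;> simp_all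
  · obtain rfl : i = 0 := by omega
    simpa using h

namespace IsPairPath

theorem mem_ground (hc : IsPairPath 𝓕 k s) (hax : SatisfiesAxioms F 𝓕) {i : ℕ} (hi : i < k) :
    s i ∈ F := by
  obtain ⟨j, hj, hmem⟩ : ∃ j, j + 1 < k ∧ s i ∈ ({s j, s (j + 1)} : Set α) := by
    rcases lt_or_ge (i + 1) k with h | h
    · exact ⟨i, h, mem_insert _ _⟩
    · refine ⟨i - 1, by have := hc.two_le; omega, ?_⟩
      rw [Nat.sub_add_cancel (by have := hc.two_le; omega)]
      exact mem_insert_of_mem _ rfl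
  exact hax.subset (hc.pair_mem j hj) hmem

theorem mem_image_Icc_iff (hc : IsPairPath 𝓕 k s) {i j t : ℕ} (hj : j < k) (ht : t < k) :
    s t ∈ s '' Icc i j ↔ i ≤ t ∧ t ≤ j :=
  hc.injOn.mem_image_iff (fun _ hx => hx.2.trans_lt hj) ht

theorem image_Icc_mem (hc : IsPairPath 𝓕 k s) (hax : SatisfiesAxioms F 𝓕) {i j : ℕ}
    (hij : i ≤ j) (hj : j < k) : s '' Icc i j ∈ 𝓕 := by
  induction j, hij using Nat.le_induction with
  | base =>
    rw [Icc_self, image_singleton]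
    exact hax.singleton_mem (hc.mem_ground hax hj)
  | succ j hij ih =>
    have hIcc : Icc i (j + 1) = Icc i j ∪ {j, j + 1} := by
      ext
      simp only [mem_union, mem_Icc, mem_insert_iff, mem_singleton_iff]
      omega
    rw [hIcc, image_union, image_pair]
    exact hax.union_mem (ih (by omega)) (hc.pair_mem j hj)
      ⟨s j, ⟨j, ⟨hij, le_rfl⟩, rfl⟩, mem_insert _ _⟩

theorem image_Iio_eq_image_Icc (hc : IsPairPath 𝓕 k s) : s '' Iio k = s '' Icc 0 (k - 1) := by
  congr 1
  ext
  simp only [mem_Iio, mem_Icc]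
  have := hc.two_le
  omega

theorem image_Iio_mem (hc : IsPairPath 𝓕 k s) (hax : SatisfiesAxioms F 𝓕) : s '' Iio k ∈ 𝓕 :=
  hc.image_Iio_eq_image_Icc ▸ hc.image_Icc_mem hax (Nat.zero_le _) (by have := hc.two_le; omega)

theorem ncard_image_Iio (hc : IsPairPath 𝓕 k s) : (s '' Iio k).ncard = k := by
  rw [hc.injOn.ncard_image]
  simp

theorem image_Icc_union_Icc_notMem (hc : IsPairPath 𝓕 k s) (hax : SatisfiesAxioms F 𝓕)
    {a b c d : ℕ} (hab : a ≤ b) (hbc : b + 1 < c) (hcd : c ≤ d) (hd : d < k) :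
    s '' (Icc a b ∪ Icc c d) ∉ 𝓕 := by
  intro hY
  have hsub {A : Set ℕ} (h : ∀ t ∈ A, t ≤ d) : A ⊆ Iio k := fun t ht => (h t ht).trans_lt hd
  have h₀ : Icc a (c - 1) ⊆ Iio k := hsub (by intro t; simp only [mem_Icc]; omega)
  have h₁ : Icc a b ∪ Icc c d ⊆ Iio k := hsub (by intro t; simp only [mem_Icc, mem_union]; omega)
  have h₂ : Icc (b + 1) d ⊆ Iio k := hsub (by intro t; simp only [mem_Icc]; omega)
  have b₀₁ : Bowtie (Icc a (c - 1)) (Icc a b ∪ Icc c d) :=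
    ⟨⟨a, by simp only [mem_inter_iff, mem_union, mem_Icc]; omega⟩,
      ⟨b + 1, by simp only [mem_sdiff, mem_union, mem_Icc]; omega⟩,
      ⟨d, by simp only [mem_sdiff, mem_union, mem_Icc]; omega⟩⟩
  have b₁₂ : Bowtie (Icc a b ∪ Icc c d) (Icc (b + 1) d) :=
    ⟨⟨c, by simp only [mem_inter_iff, mem_union, mem_Icc]; omega⟩,
      ⟨a, by simp only [mem_sdiff, mem_union, mem_Icc]; omega⟩,
      ⟨b + 1, by simp only [mem_sdiff, mem_union, mem_Icc]; omega⟩⟩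
  have b₂₀ : Bowtie (Icc (b + 1) d) (Icc a (c - 1)) :=
    ⟨⟨b + 1, by simp only [mem_inter_iff, mem_Icc]; omega⟩,
      ⟨d, by simp only [mem_sdiff, mem_Icc]; omega⟩, ⟨a, by simp only [mem_sdiff, mem_Icc]; omega⟩⟩
  refine hax.not_hasBicycleChain (hasBicycleChain_of_three
    (hc.image_Icc_mem hax (by omega) (by omega)) hY (hc.image_Icc_mem hax (by omega) hd)
    (b₀₁.image hc.injOn h₀ h₁) (b₁₂.image hc.injOn h₁ h₂) (b₂₀.image hc.injOn h₂ h₀) ?_ ?_ ?_ ?_)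
  · rw [← hc.injOn.image_inter h₀ h₁, ← hc.injOn.image_inter (inter_subset_left.trans h₀) h₂,
      image_eq_empty]
    ext t
    simp only [mem_inter_iff, mem_union, mem_Icc, mem_empty_iff_false, iff_false]
    omega
  all_goals
    rw [← image_union]
    exact image_mono fun t => by simp only [mem_union, mem_Icc]; omega

/-- Cutting `Y` at a gap `q` with the prefix `s '' Icc 0 q` gives two smaller members, intervals
by induction, separated by `q`. -/
theorem exists_eq_image_Icc (hc : IsPairPath 𝓕 k s) (hF : F.Finite) (hax : SatisfiesAxioms F 𝓕)
    {Y : Set α} (hY : Y ∈ 𝓕) (hYs : Y ⊆ s '' Iio k) :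
    ∃ i j, i ≤ j ∧ j < k ∧ Y = s '' Icc i j := by
  obtain ⟨n, hn⟩ : ∃ n, Y.ncard = n := ⟨_, rfl⟩
  induction n using Nat.strong_induction_on generalizing Y with
  | _ n ih =>
  refine exists_eq_image_Icc_of_forall_mem (hax.nonempty hY) hYs fun p q r hpq hqr hrk hp hr => ?_
  by_contra hq
  have hYfin : Y.Finite := hF.subset (hax.subset hY)
  have hT := hc.image_Icc_mem hax (Nat.zero_le q) (by omega)
  have hpT : s p ∈ s '' Icc 0 q := ⟨p, ⟨p.zero_le, hpq⟩, rfl⟩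
  have hrT : s r ∉ s '' Icc 0 q := by
    rw [hc.mem_image_Icc_iff (by omega) hrk]
    rintro ⟨-, hrq⟩
    exact hq (le_antisymm hqr hrq ▸ hr)
  have hbow : Bowtie Y (s '' Icc 0 q) :=
    ⟨⟨s p, hp, hpT⟩, ⟨s r, hr, hrT⟩, ⟨s q, ⟨q, ⟨q.zero_le, le_rfl⟩, rfl⟩, hq⟩⟩
  obtain ⟨a, b, hab, hbk, hYab⟩ := ih _
    (hn ▸ ncard_lt_ncard ⟨inter_subset_left, fun h => hrT (h hr).2⟩ hYfin)
    (hax.inter_mem hY hT hbow.1) (inter_subset_left.trans hYs) rfl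
  obtain ⟨c, d, hcd, hdk, hYcd⟩ := ih _
    (hn ▸ ncard_lt_ncard ⟨sdiff_subset, fun h => (h hp).2 hpT⟩ hYfin)
    (hax.diff_mem hY hT hbow) (sdiff_subset.trans hYs) rfl
  have hbq : b < q := by
    have hb : s b ∈ Y ∩ s '' Icc 0 q := hYab ▸ ⟨b, ⟨hab, le_rfl⟩, rfl⟩
    have := ((hc.mem_image_Icc_iff (by omega) hbk).1 hb.2).2
    exact this.lt_of_ne fun h => hq (h ▸ hb.1)
  have hqc : q < c := by
    have hc' : s c ∈ Y \ s '' Icc 0 q := hYcd ▸ ⟨c, ⟨le_rfl, hcd⟩, rfl⟩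
    by_contra! h
    exact hc'.2 ⟨c, ⟨c.zero_le, h⟩, rfl⟩
  refine hc.image_Icc_union_Icc_notMem hax hab (by omega) hcd hdk ?_
  rwa [image_union, ← hYab, ← hYcd, inter_union_sdiff]

theorem isStringOfSausages (hc : IsPairPath 𝓕 k s) (hF : F.Finite)
    (hax : SatisfiesAxioms F 𝓕) (hS : s '' Iio k = F) : IsStringOfSausages F 𝓕 := by
  have himage (i j : Fin k) : (fun i : Fin k => s i) '' Icc i j = s '' Icc (i : ℕ) j := by
    rw [← Fin.image_val_Icc, image_image]
  refine ⟨k, fun i => s i, fun i j h => Fin.ext (hc.injOn i.isLt j.isLt h), ?_, ?_⟩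
  · rw [← hS, ← Fin.range_val, ← range_comp]
    rfl
  · ext X
    constructor
    · intro hX
      obtain ⟨i, j, hij, hj, rfl⟩ := hc.exists_eq_image_Icc hF hax hX (hS ▸ hax.subset hX)
      exact ⟨⟨i, by omega⟩, ⟨j, hj⟩, hij, (himage ⟨i, by omega⟩ ⟨j, hj⟩).symm⟩
    · rintro ⟨i, j, hij, rfl⟩
      rw [himage]
      exact hc.image_Icc_mem hax hij j.isLt

theorem reverse (hc : IsPairPath 𝓕 k s) : IsPairPath 𝓕 k (fun t => s (k - 1 - t)) := by
  refine ⟨hc.two_le, fun t ht t' ht' h => ?_, fun i hi => ?_⟩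
  · simp only [mem_Iio] at ht ht'
    have := hc.injOn (mem_Iio.2 (by omega)) (mem_Iio.2 (by omega)) h
    omega
  · have h := hc.pair_mem (k - 1 - (i + 1)) (by omega)
    rwa [show k - 1 - (i + 1) + 1 = k - 1 - i by omega, pair_comm] at h

theorem image_Iio_reverse : (fun t => s (k - 1 - t)) '' Iio k = s '' Iio k := by
  ext x
  constructor <;> rintro ⟨t, ht, rfl⟩ <;> simp only [mem_Iio] at ht
  · exact ⟨k - 1 - t, mem_Iio.2 (by omega), rfl⟩
  · exact ⟨k - 1 - t, by simp only [mem_Iio]; omega, congrArg s (by omega)⟩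

theorem image_Icc_reverse {i j : ℕ} (hi : i < k) (hj : j < k) :
    (fun t => s (k - 1 - t)) '' Icc i j = s '' Icc (k - 1 - j) (k - 1 - i) := by
  ext x
  constructor <;> rintro ⟨t, ht, rfl⟩ <;> simp only [mem_Icc] at ht
  · exact ⟨k - 1 - t, by simp only [mem_Icc]; omega, rfl⟩
  · exact ⟨k - 1 - t, by simp only [mem_Icc]; omega, congrArg s (by omega)⟩

theorem update (hc : IsPairPath 𝓕 k s) {y : α} (hy : y ∉ s '' Iio k)
    (hys : ({s (k - 1), y} : Set α) ∈ 𝓕) : IsPairPath 𝓕 (k + 1) (Function.update s k y) := by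
  have hagree : EqOn s (Function.update s k y) (Iio k) := fun t ht =>
    (Function.update_of_ne (ne_of_lt ht) _ _).symm
  refine ⟨by have := hc.two_le; omega, ?_, fun i hi => ?_⟩
  · rw [show Iio (k + 1) = insert k (Iio k) by ext; simp only [mem_Iio, mem_insert_iff]; omega,
      injOn_insert self_notMem_Iio, ← image_congr hagree, Function.update_self]
    exact ⟨hc.injOn.congr hagree, hy⟩
  · rw [Function.update_of_ne (by omega)]
    rcases eq_or_ne (i + 1) k with h | h
    · rw [← h, Function.update_self, show i = k - 1 by omega]
      exact hys
    · rw [Function.update_of_ne h]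
      exact hc.pair_mem i (by omega)

theorem image_Iio_subset_update {y : α} : s '' Iio k ⊆ Function.update s k y '' Iio (k + 1) := by
  rintro _ ⟨t, ht, rfl⟩
  exact ⟨t, mem_Iio.2 (Nat.lt_succ_of_lt ht), Function.update_of_ne (ne_of_lt ht) _ _⟩

theorem isProperMinimalSuperset_image_Icc (hc : IsPairPath 𝓕 k s) (hF : F.Finite)
    (hax : SatisfiesAxioms F 𝓕) {i j p q : ℕ} (hpi : p ≤ i) (hij : i ≤ j) (hjq : j ≤ q)
    (hq : q < k) (hstep : i - p + (q - j) = 1) :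
    IsProperMinimalSuperset 𝓕 (s '' Icc i j) (s '' Icc p q) := by
  refine ⟨hc.image_Icc_mem hax (by omega) hq, image_mono (Icc_subset_Icc hpi hjq),
    fun h => ?_, fun Y hY hsub hsup => ?_⟩
  · have hp := (hc.mem_image_Icc_iff (i := i) (j := j) (by omega) (by omega : p < k)).1
      (by rw [h]; exact mem_image_of_mem s ⟨le_rfl, by omega⟩)
    have hq := (hc.mem_image_Icc_iff (i := i) (j := j) (by omega) hq).1
      (by rw [h]; exact mem_image_of_mem s ⟨by omega, le_rfl⟩)
    omega
  · obtain ⟨p', q', hpq', hq', rfl⟩ := hc.exists_eq_image_Icc hF hax hY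
      (hsup.trans (image_mono fun t ht => ht.2.trans_lt hq))
    have hi := (hc.mem_image_Icc_iff hq' (by omega)).1 (hsub ⟨i, ⟨le_rfl, hij⟩, rfl⟩)
    have hj := (hc.mem_image_Icc_iff hq' (by omega)).1 (hsub ⟨j, ⟨hij, le_rfl⟩, rfl⟩)
    have hp' := (hc.mem_image_Icc_iff hq (by omega)).1 (hsup ⟨p', ⟨le_rfl, hpq'⟩, rfl⟩)
    have hq'' := (hc.mem_image_Icc_iff hq hq').1 (hsup ⟨q', ⟨hpq', le_rfl⟩, rfl⟩)
    rcases (by omega : p' = i ∧ q' = j ∨ p' = p ∧ q' = q) with ⟨rfl, rfl⟩ | ⟨rfl, rfl⟩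
    exacts [Or.inl rfl, Or.inr rfl]

/-- An inner interval `X ∩ S` would have three proper minimal supersets: the two one-step
extensions inside `S` and one inside `X`. -/
theorem exists_inter_eq_image_Icc (hc : IsPairPath 𝓕 k s) (hF : F.Finite)
    (hax : SatisfiesAxioms F 𝓕) {X : Set α} (hX : X ∈ 𝓕) (hXS : (X ∩ s '' Iio k).Nonempty)
    (hXS' : (X \ s '' Iio k).Nonempty) :
    ∃ i j, i ≤ j ∧ j < k ∧ X ∩ s '' Iio k = s '' Icc i j ∧ (i = 0 ∨ j = k - 1) := by
  have hA := hax.inter_mem hX (hc.image_Iio_mem hax) hXS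
  obtain ⟨i, j, hij, hj, hXij⟩ := hc.exists_eq_image_Icc hF hax hA inter_subset_right
  refine ⟨i, j, hij, hj, hXij, ?_⟩
  by_contra! hend
  have hnotX (t : ℕ) (ht : t < k) (hti : t < i ∨ j < t) : s t ∉ X := fun h => by
    have := (hc.mem_image_Icc_iff hj ht).1 (by rw [← hXij]; exact ⟨h, mem_image_of_mem s ht⟩)
    omega
  obtain ⟨x, hxX, hxS⟩ := hXS'
  have hAX : s '' Icc i j ⊂ X :=
    hXij ▸ (⟨inter_subset_left, fun h => hxS (h hxX).2⟩ : X ∩ s '' Iio k ⊂ X)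
  obtain ⟨Z, hZ, hZX⟩ := exists_isProperMinimalSuperset_subset hX (hF.subset (hax.subset hX)) hAX
  have hleft := hc.isProperMinimalSuperset_image_Icc hF hax (p := i - 1) (q := j)
    (by omega) hij le_rfl hj (by omega)
  have hright := hc.isProperMinimalSuperset_image_Icc hF hax (p := i) (q := j + 1)
    le_rfl hij (by omega) (by omega) (by omega)
  have hne : s '' Icc (i - 1) j ≠ s '' Icc i (j + 1) := fun h => by
    have := (hc.mem_image_Icc_iff (i := i) (j := j + 1) (t := i - 1) (by omega) (by omega)).1
      (by rw [← h]; exact mem_image_of_mem s ⟨le_rfl, by omega⟩)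
    omega
  rcases hax.eq_or_eq_of_isProperMinimalSuperset (hXij ▸ hA) hleft hright hZ hne with rfl | rfl
  · exact hnotX (i - 1) (by omega) (by omega) (hZX ⟨i - 1, ⟨le_rfl, by omega⟩, rfl⟩)
  · exact hnotX (j + 1) (by omega) (by omega) (hZX ⟨j + 1, ⟨by omega, le_rfl⟩, rfl⟩)

theorem exists_bowtie_ncard_lt (hc : IsPairPath 𝓕 k s) (hF : F.Finite)
    (hax : SatisfiesAxioms F 𝓕) {X : Set α} (hX : X ∈ 𝓕) (hXS : Bowtie X (s '' Iio k)) {j : ℕ}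
    (hXj : X ∩ s '' Iio k = s '' Icc 0 j) (hj : 1 ≤ j) (hjk : j + 1 < k) :
    ∃ Y ∈ 𝓕, Bowtie Y (s '' Iio k) ∧ Y.ncard < X.ncard := by
  have hmemX (t : ℕ) (ht : t < k) : s t ∈ X ↔ t ≤ j := by
    have hXS : s t ∈ X ↔ s t ∈ X ∩ s '' Iio k := ⟨fun h => ⟨h, mem_image_of_mem s ht⟩, And.left⟩
    rw [hXS, hXj, hc.mem_image_Icc_iff (by omega) ht]
    omega
  have hpairS : ({s j, s (j + 1)} : Set α) ⊆ s '' Iio k :=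
    pair_subset ⟨j, mem_Iio.2 (by omega), rfl⟩ ⟨j + 1, hjk, rfl⟩
  have hs0 : s 0 ∉ ({s j, s (j + 1)} : Set α) := by
    rintro (h | h) <;>
      (have := hc.injOn (mem_Iio.2 (by omega)) (mem_Iio.2 (by omega)) h; omega)
  have hXpair : Bowtie X {s j, s (j + 1)} :=
    ⟨⟨s j, (hmemX j (by omega)).2 le_rfl, mem_insert _ _⟩,
      ⟨s 0, (hmemX 0 (by omega)).2 (by omega), hs0⟩,
      ⟨s (j + 1), mem_insert_of_mem _ rfl, fun h => by have := (hmemX _ hjk).1 h; omega⟩⟩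
  obtain ⟨x, hxX, hxS⟩ := hXS.2.1
  obtain ⟨y, hyS, hyX⟩ := hXS.2.2
  refine ⟨X \ {s j, s (j + 1)}, hax.diff_mem hX (hc.pair_mem j hjk) hXpair,
    ⟨⟨s 0, ⟨(hmemX 0 (by omega)).2 (by omega), hs0⟩, ⟨0, mem_Iio.2 (by omega), rfl⟩⟩,
      ⟨x, ⟨hxX, fun h => hxS (hpairS h)⟩, hxS⟩, ⟨y, hyS, fun h => hyX h.1⟩⟩,
    ncard_lt_ncard ⟨sdiff_subset, fun h => (h ((hmemX j (by omega)).2 le_rfl)).2 (mem_insert _ _)⟩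
      (hF.subset (hax.subset hX))⟩

theorem exists_inter_eq_singleton (hc : IsPairPath 𝓕 k s) (hF : F.Finite)
    (hax : SatisfiesAxioms F 𝓕) {X : Set α} (hX : X ∈ 𝓕) (hXS : Bowtie X (s '' Iio k))
    (hmin : ∀ Y ∈ 𝓕, Y.ncard < X.ncard → ¬Bowtie Y (s '' Iio k)) :
    ∃ e, X ∩ s '' Iio k = {e} := by
  have hprefix {t : ℕ → α} (ht : IsPairPath 𝓕 k t) (hts : t '' Iio k = s '' Iio k) {j : ℕ}
      (hXj : X ∩ s '' Iio k = t '' Icc 0 j) (hj : j < k) : X ∩ s '' Iio k = {t 0} := by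
    rcases Nat.eq_zero_or_pos j with rfl | hj0
    · rw [hXj, Icc_self, image_singleton]
    have hjk : j + 1 < k := by
      by_contra
      obtain ⟨y, hyS, hyX⟩ := hXS.2.2
      rw [← hts, ht.image_Iio_eq_image_Icc, show k - 1 = j by omega, ← hXj] at hyS
      exact hyX hyS.1
    rw [← hts] at hXS hXj hmin
    obtain ⟨Y, hY, hYS, hlt⟩ := ht.exists_bowtie_ncard_lt hF hax hX hXS hXj hj0 hjk
    exact absurd hYS (hmin Y hY hlt)
  obtain ⟨i, j, hij, hj, hXij, rfl | hjk⟩ := hc.exists_inter_eq_image_Icc hF hax hX hXS.1 hXS.2.1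
  · exact ⟨_, hprefix hc rfl hXij hj⟩
  · refine ⟨_, hprefix hc.reverse image_Iio_reverse (j := k - 1 - i) ?_ (by omega)⟩
    rw [image_Icc_reverse (by omega) (by omega), hXij, hjk]
    congr 2
    omega

end IsPairPath

structure IsClosedPairPath (𝓕 : Set (Set α)) (k : ℕ) (s : ℕ → α) : Prop
    extends IsPairPath 𝓕 k s where
  mem_of_pair_mem : ∀ x ∈ s '' Iio k, ∀ y ≠ x, ({x, y} : Set α) ∈ 𝓕 → y ∈ s '' Iio k

/-- Take a longest path through the given one: a new neighbour of an end vertex would extend it,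
and an inner vertex already has two neighbours on it. -/
theorem IsPairPath.exists_isClosedPairPath (hc : IsPairPath 𝓕 k s) (hF : F.Finite)
    (hax : SatisfiesAxioms F 𝓕) : ∃ n t, IsClosedPairPath 𝓕 n t ∧ s '' Iio k ⊆ t '' Iio n := by
  let K := {n | ∃ t, IsPairPath 𝓕 n t ∧ s '' Iio k ⊆ t '' Iio n}
  have hbdd : BddAbove K := by
    refine ⟨F.ncard, ?_⟩
    rintro n ⟨u, hu, -⟩
    exact hu.ncard_image_Iio ▸ ncard_le_ncard (hax.subset (hu.image_Iio_mem hax)) hF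
  obtain ⟨t, ht, hst⟩ : sSup K ∈ K := Nat.sSup_mem ⟨k, s, hc, subset_rfl⟩ hbdd
  set n := sSup K
  have hend : ∀ u, IsPairPath 𝓕 n u → u '' Iio n = t '' Iio n →
      ∀ y ∉ t '' Iio n, ({u (n - 1), y} : Set α) ∉ 𝓕 := by
    intro u hu hut y hy hpair
    have : n + 1 ∈ K := ⟨_, hu.update (hut ▸ hy) hpair,
      hst.trans (hut ▸ IsPairPath.image_Iio_subset_update)⟩
    exact (le_csSup hbdd this).not_gt (Nat.lt_succ_self n)
  refine ⟨n, t, ⟨ht, ?_⟩, hst⟩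
  rintro _ ⟨i, hi, rfl⟩ y hyi hpair
  by_contra hy
  have hn := ht.two_le
  simp only [mem_Iio] at hi
  rcases eq_or_ne i (n - 1) with rfl | hi'
  · exact hend t ht rfl y hy hpair
  rcases eq_or_ne i 0 with rfl | hi0
  · exact hend _ ht.reverse IsPairPath.image_Iio_reverse y hy (by simpa using hpair)
  have hprev : ({t i, t (i - 1)} : Set α) ∈ 𝓕 := by
    have h := ht.pair_mem (i - 1) (by omega)
    rwa [Nat.sub_add_cancel (by omega), pair_comm] at h
  rcases hax.eq_or_eq_of_pair_mem hprev (ht.pair_mem i (by omega)) hpair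
      (ht.injOn.ne hi (mem_Iio.2 (by omega)) (by omega))
      (ht.injOn.ne hi (mem_Iio.2 (by omega)) (by omega)) hyi.symm
      (ht.injOn.ne (mem_Iio.2 (by omega)) (mem_Iio.2 (by omega)) (by omega))
    with rfl | rfl
  exacts [hy ⟨i - 1, mem_Iio.2 (by omega), rfl⟩, hy ⟨i + 1, mem_Iio.2 (by omega), rfl⟩]

def CrossesClosedPairPath (𝓕 : Set (Set α)) (X : Set α) : Prop :=
  ∃ k s, IsClosedPairPath 𝓕 k s ∧ Bowtie X (s '' Iio k)

namespace IsClosedPairPath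

theorem image_Iio_subset (hg : IsClosedPairPath 𝓕 k s) {n : ℕ} {t : ℕ → α}
    (ht : IsPairPath 𝓕 n t) {p : ℕ} (hp : p < n) (h : t p ∈ s '' Iio k) :
    t '' Iio n ⊆ s '' Iio k := by
  have hstep (q : ℕ) (hq : q + 1 < n) : t q ∈ s '' Iio k ↔ t (q + 1) ∈ s '' Iio k :=
    ⟨fun h => hg.mem_of_pair_mem _ h _
        (ht.injOn.ne (mem_Iio.2 (by omega)) (mem_Iio.2 (by omega)) (by omega))
        (ht.pair_mem q hq),
      fun h => hg.mem_of_pair_mem _ h _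
        (ht.injOn.ne (mem_Iio.2 (by omega)) (mem_Iio.2 (by omega)) (by omega))
        (pair_comm (t q) _ ▸ ht.pair_mem q hq)⟩
  have hall (q : ℕ) (hq : q < n) : t q ∈ s '' Iio k ↔ t 0 ∈ s '' Iio k := by
    induction q with
    | zero => rfl
    | succ q ih => rw [← hstep q hq, ih (by omega)]
  rintro _ ⟨q, hq, rfl⟩
  exact (hall q hq).2 ((hall p hp).1 h)

/-- A member `W` crossing `S ⊆ X` is no smaller than `X`, hence not inside `X`; then `X ∩ W` and
`X \ W` are smaller members meeting `S` without containing it, so they lie inside `S`. -/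
theorem subset_of_image_Iio_subset (hg : IsClosedPairPath 𝓕 k s) (hirr : IrreducibleFamily F 𝓕)
    (hF : F.Finite) (hax : SatisfiesAxioms F 𝓕) {X : Set α} (hX : X ∈ 𝓕)
    (hmin : ∀ Y ∈ 𝓕, Y.ncard < X.ncard → ¬CrossesClosedPairPath 𝓕 Y)
    (hSX : s '' Iio k ⊆ X) (hS : (s '' Iio k).ncard < F.ncard) : X ⊆ s '' Iio k := by
  have hXfin : X.Finite := hF.subset (hax.subset hX)
  obtain ⟨W, hW, hWS⟩ := hirr.exists_bowtie hax (hg.image_Iio_mem hax)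
    (by rw [hg.ncard_image_Iio]; exact hg.two_le) hS
  obtain ⟨w, hwW, hwS⟩ := hWS.1
  obtain ⟨v, hvS, hvW⟩ := hWS.2.2
  have hWX : ¬W ⊆ X := fun h => by
    rcases lt_or_ge W.ncard X.ncard with hlt | hge
    · exact hmin W hW hlt ⟨k, s, hg, hWS⟩
    · exact hvW (eq_of_subset_of_ncard_le h hge hXfin ▸ hSX hvS)
  have hXW : Bowtie X W := ⟨⟨w, hSX hwS, hwW⟩, ⟨v, hSX hvS, hvW⟩, sdiff_nonempty.2 hWX⟩
  have hinside {Y : Set α} (hY : Y ∈ 𝓕) (hYX : Y ⊂ X) (hYS : (Y ∩ s '' Iio k).Nonempty)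
      (hSY : (s '' Iio k \ Y).Nonempty) : Y ⊆ s '' Iio k := by
    by_contra h
    exact hmin Y hY (ncard_lt_ncard hYX hXfin) ⟨k, s, hg, hYS, sdiff_nonempty.2 h, hSY⟩
  intro x hx
  by_cases hxW : x ∈ W
  · exact hinside (hax.inter_mem hX hW hXW.1) ⟨inter_subset_left, fun h => hvW (h (hSX hvS)).2⟩
      ⟨w, ⟨hSX hwS, hwW⟩, hwS⟩ ⟨v, hvS, fun h => hvW h.2⟩ ⟨hx, hxW⟩
  · exact hinside (hax.diff_mem hX hW hXW) ⟨sdiff_subset, fun h => (h (hSX hwS)).2 hwW⟩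
      ⟨v, ⟨hSX hvS, hvW⟩, hvS⟩ ⟨w, hwS, fun h => h.2 hwW⟩ ⟨hx, hxW⟩

/-- The closed path `T` through a pair outside `S` is disjoint from `S`; either `T ⊆ X`, and then
`X ⊆ T` misses `e`, or `X` crosses `T` in two points. -/
theorem not_pair_subset_sdiff (hg : IsClosedPairPath 𝓕 k s) (hirr : IrreducibleFamily F 𝓕)
    (hF : F.Finite) (hax : SatisfiesAxioms F 𝓕) {X : Set α} (hX : X ∈ 𝓕)
    (hmin : ∀ Y ∈ 𝓕, Y.ncard < X.ncard → ¬CrossesClosedPairPath 𝓕 Y) {e : α}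
    (hXe : X ∩ s '' Iio k = {e}) {b b' : α} (hbb' : b ≠ b') (hpair : ({b, b'} : Set α) ∈ 𝓕) :
    ¬({b, b'} : Set α) ⊆ X \ s '' Iio k := by
  intro hsub
  obtain ⟨m, t, ht, hbt⟩ := (isPairPath_pair hbb' hpair).exists_isClosedPairPath hF hax
  have hb : b ∈ t '' Iio m := hbt ⟨0, by simp, by simp⟩
  have hb' : b' ∈ t '' Iio m := hbt ⟨1, by simp, by simp⟩
  have he : e ∈ X ∩ s '' Iio k := hXe ▸ rfl
  have heT : e ∉ t '' Iio m := by
    rintro ⟨p, hp, rfl⟩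
    exact (hsub (mem_insert b _)).2 (hg.image_Iio_subset ht.toIsPairPath hp he.2 hb)
  by_cases hTX : t '' Iio m ⊆ X
  · have heF : e ∈ F := hax.subset hX he.1
    exact heT (ht.subset_of_image_Iio_subset hirr hF hax hX hmin hTX
      (ncard_lt_ncard ⟨hax.subset (ht.image_Iio_mem hax), fun h => heT (h heF)⟩ hF) he.1)
  · obtain ⟨e', hXe'⟩ := ht.exists_inter_eq_singleton hF hax hX
      ⟨⟨b, (hsub (mem_insert b _)).1, hb⟩, ⟨e, he.1, heT⟩, sdiff_nonempty.2 hTX⟩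
      fun Y hY hlt hYT => hmin Y hY hlt ⟨m, t, ht, hYT⟩
    have h₁ : b ∈ X ∩ t '' Iio m := ⟨(hsub (mem_insert b _)).1, hb⟩
    have h₂ : b' ∈ X ∩ t '' Iio m := ⟨(hsub (mem_insert_of_mem b rfl)).1, hb'⟩
    rw [hXe'] at h₁ h₂
    exact hbb' (h₁.trans h₂.symm)

end IsClosedPairPath

theorem IrreducibleFamily.not_crossesClosedPairPath (hirr : IrreducibleFamily F 𝓕) (hF : F.Finite)
    (hax : SatisfiesAxioms F 𝓕) {X : Set α} (hX : X ∈ 𝓕) : ¬CrossesClosedPairPath 𝓕 X := by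
  obtain ⟨n, hn⟩ : ∃ n, X.ncard = n := ⟨_, rfl⟩
  induction n using Nat.strong_induction_on generalizing X with
  | _ n ih =>
  rintro ⟨k, s, hg, hXS⟩
  have hmin (Y : Set α) (hY : Y ∈ 𝓕) (hlt : Y.ncard < X.ncard) : ¬CrossesClosedPairPath 𝓕 Y :=
    ih _ (hn ▸ hlt) hY rfl
  obtain ⟨e, hXe⟩ := hg.exists_inter_eq_singleton hF hax hX hXS
    fun Y hY hlt hYS => hmin Y hY hlt ⟨k, s, hg, hYS⟩
  have he : e ∈ X ∩ s '' Iio k := hXe ▸ rfl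
  have hB := hax.diff_mem hX (hg.image_Iio_mem hax) hXS
  have hBF : X \ s '' Iio k ⊆ F := hax.subset hB
  rcases le_or_gt (X \ s '' Iio k).ncard 1 with h₁ | h₂
  · obtain ⟨b, hb⟩ := hXS.2.1
    obtain ⟨b', hB'⟩ :=
      ((ncard_le_one_iff_eq (hF.subset hBF)).1 h₁).resolve_left (nonempty_of_mem hb).ne_empty
    obtain rfl : b = b' := by simpa [hB'] using hb
    have hXeb : X = {e, b} := by rw [← inter_union_sdiff X (s '' Iio k), hXe, hB', singleton_union]
    exact hb.2 (hg.mem_of_pair_mem e he.2 b (fun h => hb.2 (h ▸ he.2)) (hXeb ▸ hX))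
  · obtain ⟨b, b', hbb', hsub, hpair⟩ := hirr.exists_pair_mem_subset hF hax hB h₂
      (ncard_lt_ncard ⟨hBF, fun h => (h (hax.subset hX he.1)).2 he.2⟩ hF)
    exact hg.not_pair_subset_sdiff hirr hF hax hX hmin hXe hbb' hpair hsub

theorem IsClosedPairPath.image_Iio_eq_ground (hg : IsClosedPairPath 𝓕 k s)
    (hirr : IrreducibleFamily F 𝓕) (hF : F.Finite) (hax : SatisfiesAxioms F 𝓕) :
    s '' Iio k = F := by
  by_contra hne
  obtain ⟨X, hX, hXS⟩ := hirr.exists_bowtie hax (hg.image_Iio_mem hax)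
    (by rw [hg.ncard_image_Iio]; exact hg.two_le)
    (ncard_lt_ncard ((hax.subset (hg.image_Iio_mem hax)).ssubset_of_ne hne) hF)
  exact hirr.not_crossesClosedPairPath hF hax hX ⟨k, s, hg, hXS⟩

end

theorem irreducible_family_string_or_fat (F : Set α) (hF : F.Finite)
    (𝓕 : Set (Set α)) (hax : SatisfiesAxioms F 𝓕)
    (hirr : IrreducibleFamily F 𝓕) :
    IsStringOfSausages F 𝓕 ∨ IsFatSausage F 𝓕 := by
  by_cases hfat : ∀ X ∈ 𝓕, X.ncard ≤ 1 ∨ X = F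
  · exact Or.inr (hax.isFatSausage hF hfat)
  push Not at hfat
  obtain ⟨E, hE, hE₁, hEF⟩ := hfat
  obtain ⟨a, b, hab, -, hpair⟩ := hirr.exists_pair_mem_subset hF hax hE (by omega)
    (ncard_lt_ncard ((hax.subset hE).ssubset_of_ne hEF) hF)
  obtain ⟨k, s, hg, -⟩ := (isPairPath_pair hab hpair).exists_isClosedPairPath hF hax
  exact Or.inl (hg.isStringOfSausages hF hax (hg.image_Iio_eq_ground hirr hF hax))
end

section
/- Let 𝒞 and 𝒟 be two clone structures over disjoint finite sets C and D, respectively. Then for each c ∈ C, the family of subsets 𝒞(c → 𝒟), regarded as a family of subsets of (C \ {c}) ∪ D, is a clone structure, i.e., there exists a preference profile R' over (C \ {c}) ∪ D whose family of clone sets equals 𝒞(c → 𝒟). -/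
variable {α : Type*}

/-- `𝓒` is a clone structure over `C`. -/
def IsCloneStructure (C : Set α) (𝓒 : Set (Set α)) : Prop :=
  ∃ (n : ℕ) (R : Fin n → α → α → Prop), IsProfile C R ∧ 𝓒 = cloneSets C R

/-- The embedding `𝓔(e → 𝓓)` of a family `𝓓` over `D` into `𝓔` at element `e`:
each set of `𝓔` containing `e` has `e` replaced by `D`; the sets of `𝓓` are added. -/
def embedFamily (𝓔 : Set (Set α)) (e : α) (D : Set α) (𝓓 : Set (Set α)) :
    Set (Set α) :=
  𝓓 ∪ {Y | ∃ X ∈ 𝓔, (e ∈ X ∧ Y = (X \ {e}) ∪ D) ∨ (e ∉ X ∧ Y = X)}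

/-!
Take profiles `R` over `C` and `S` over `D`. For every voter `i` of `R`, voter `j` of `S` and
`b : Bool` there is a new voter ranking `(C \ {c}) ∪ D` lexicographically: first as `R i`
ranks the images under the map collapsing `D` to `c`, then, inside `D`, as `S j` or, if `b`,
its reverse. The clone sets inside `D` are then those of `S`, and a clone set `X` disjoint from
`D`, resp. containing `D`, comes from the clone set `X`, resp. `(X \ D) ∪ {c}`, of `R`. No clone
set meets both `D` and its complement without containing `D`: an element of `D` outside it would
be ranked against the rest of `X` alike by `S j` and by its reverse.
-/

open Classical in
noncomputable def collapseTo (D : Set α) (c : α) (x : α) : α :=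
  if x ∈ D then c else x

def embedRel (D : Set α) (c : α) (r s : α → α → Prop) (x y : α) : Prop :=
  r (collapseTo D c x) (collapseTo D c y) ∨ (x ∈ D ∧ y ∈ D ∧ s x y)

def embedProfile {ι κ : Type*} (D : Set α) (c : α) (R : ι → α → α → Prop)
    (S : κ → α → α → Prop) (v : ι × κ × Bool) : α → α → Prop :=
  embedRel D c (R v.1) (cond v.2.2 (flip (S v.2.1)) (S v.2.1))

def IsCloneFor (C : Set α) (r : α → α → Prop) (X : Set α) : Prop :=
  ∀ x ∈ X, ∀ x' ∈ X, ∀ a ∈ C \ X, (r x a ↔ r x' a)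

def commonCloneSets {ι : Type*} (C : Set α) (T : ι → α → α → Prop) : Set (Set α) :=
  {X | X.Nonempty ∧ X ⊆ C ∧ ∀ v, IsCloneFor C (T v) X}

section Collapse

variable {C D : Set α} {c x y : α}

@[simp]
lemma collapseTo_of_mem (h : x ∈ D) : collapseTo D c x = c := if_pos h

@[simp]
lemma collapseTo_of_notMem (h : x ∉ D) : collapseTo D c x = x := if_neg h

lemma collapseTo_mem (hc : c ∈ C) (hx : x ∈ (C \ {c}) ∪ D) : collapseTo D c x ∈ C := by
  by_cases hxD : x ∈ D
  · simpa [hxD] using hc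
  · simpa [hxD] using (hx.resolve_right hxD).1

lemma mem_of_collapseTo_eq_collapseTo (hx : x ∈ (C \ {c}) ∪ D) (hy : y ∈ (C \ {c}) ∪ D)
    (hxy : x ≠ y) (h : collapseTo D c x = collapseTo D c y) : x ∈ D ∧ y ∈ D := by
  by_cases hxD : x ∈ D <;> by_cases hyD : y ∈ D <;> simp_all

end Collapse

section IsLinOn

variable {C D : Set α} {c a b : α} {r s : α → α → Prop}

lemma IsLinOn.rel_iff_not_rel (h : IsLinOn C r) (ha : a ∈ C) (hb : b ∈ C) (hab : a ≠ b) :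
    r a b ↔ ¬ r b a :=
  ⟨fun h₁ h₂ => h.1 a ha (h.2.1 a ha b hb a ha h₁ h₂),
    fun h' => (h.2.2 a ha b hb hab).resolve_right h'⟩

lemma IsLinOn.flip (h : IsLinOn C r) : IsLinOn C (flip r) :=
  ⟨h.1, fun a ha b hb x hx hab hbx => h.2.1 x hx b hb a ha hbx hab,
    fun a ha b hb hne => (h.2.2 a ha b hb hne).symm⟩

lemma IsLinOn.embedRel (hc : c ∈ C) (hr : IsLinOn C r) (hs : IsLinOn D s) :
    IsLinOn ((C \ {c}) ∪ D) (embedRel D c r s) := by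
  refine ⟨fun a ha h => ?_, fun a ha b hb x hx hab hbx => ?_, fun a ha b hb hne => ?_⟩
  · rcases h with h | ⟨haD, -, h⟩
    exacts [hr.1 _ (collapseTo_mem hc ha) h, hs.1 a haD h]
  · rcases hab with hab | ⟨haD, hbD, hab⟩ <;> rcases hbx with hbx | ⟨hbD', hxD, hbx⟩
    · exact Or.inl (hr.2.1 _ (collapseTo_mem hc ha) _ (collapseTo_mem hc hb) _
        (collapseTo_mem hc hx) hab hbx)
    · have hbx : collapseTo D c b = collapseTo D c x := by simp [hbD', hxD]
      exact Or.inl (hbx ▸ hab)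
    · have hab : collapseTo D c a = collapseTo D c b := by simp [haD, hbD]
      exact Or.inl (hab ▸ hbx)
    · exact Or.inr ⟨haD, hxD, hs.2.1 a haD b hbD x hxD hab hbx⟩
  · by_cases h : collapseTo D c a = collapseTo D c b
    · obtain ⟨haD, hbD⟩ := mem_of_collapseTo_eq_collapseTo ha hb hne h
      exact (hs.2.2 a haD b hbD hne).imp (fun h => Or.inr ⟨haD, hbD, h⟩)
        (fun h => Or.inr ⟨hbD, haD, h⟩)
    · exact (hr.2.2 _ (collapseTo_mem hc ha) _ (collapseTo_mem hc hb) h).imp Or.inl Or.inl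

lemma isLinOn_embedProfile {ι κ : Type*} {R : ι → α → α → Prop} {S : κ → α → α → Prop}
    (hc : c ∈ C) (hR : ∀ i, IsLinOn C (R i)) (hS : ∀ j, IsLinOn D (S j)) (v : ι × κ × Bool) :
    IsLinOn ((C \ {c}) ∪ D) (embedProfile D c R S v) := by
  obtain ⟨i, j, _ | _⟩ := v
  exacts [(hR i).embedRel hc (hS j), (hR i).embedRel hc (hS j).flip]

end IsLinOn

section EmbedRel

variable {D : Set α} {c x y : α} {r s : α → α → Prop}

lemma embedRel_of_notMem_left (hx : x ∉ D) :
    embedRel D c r s x y ↔ r (collapseTo D c x) (collapseTo D c y) := by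
  simp [embedRel, hx]

lemma embedRel_of_notMem_right (hy : y ∉ D) :
    embedRel D c r s x y ↔ r (collapseTo D c x) (collapseTo D c y) := by
  simp [embedRel, hy]

lemma embedRel_of_mem_of_mem (hr : ¬ r c c) (hx : x ∈ D) (hy : y ∈ D) :
    embedRel D c r s x y ↔ s x y := by
  simp [embedRel, hx, hy, hr]

end EmbedRel

section IsCloneFor

variable {C D X Z : Set α} {c d x : α} {r s : α → α → Prop}

lemma mem_cloneSets_iff {n : ℕ} {R : Fin n → α → α → Prop} :
    X ∈ cloneSets C R ↔ X.Nonempty ∧ X ⊆ C ∧ ∀ i, IsCloneFor C (R i) X :=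
  and_congr_right fun _ => and_congr_right fun _ =>
    ⟨fun h i x hx x' hx' a ha => h x hx x' hx' a ha i,
      fun h x hx x' hx' a ha i => h i x hx x' hx' a ha⟩

lemma isCloneStructure_commonCloneSets {ι : Type*} [Finite ι] [Nonempty ι]
    {T : ι → α → α → Prop} (hT : ∀ v, IsLinOn C (T v)) :
    IsCloneStructure C (commonCloneSets C T) := by
  obtain ⟨N, ⟨e⟩⟩ := Finite.exists_equiv_fin ι
  have hN : 0 < N := Fin.pos_iff_nonempty.mpr (e.nonempty_congr.mp ‹_›)
  refine ⟨N, T ∘ e.symm, ⟨hN, fun _ => hT _⟩, ?_⟩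
  ext X
  rw [mem_cloneSets_iff]
  exact and_congr_right fun _ => and_congr_right fun _ => e.symm.forall_congr_right.symm

lemma IsCloneFor.flip (h : IsCloneFor D s X) (hs : IsLinOn D s) (hX : X ⊆ D) :
    IsCloneFor D (flip s) X := by
  intro x hx x' hx' a ha
  have hxa : x ≠ a := fun h => ha.2 (h ▸ hx)
  have hx'a : x' ≠ a := fun h => ha.2 (h ▸ hx')
  show s a x ↔ s a x'
  rw [hs.rel_iff_not_rel ha.1 (hX hx) hxa.symm, hs.rel_iff_not_rel ha.1 (hX hx') hx'a.symm]
  exact not_congr (h x hx x' hx' a ha)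

lemma IsCloneFor.embedRel_of_subset (h : IsCloneFor D s X) (hX : X ⊆ D) :
    IsCloneFor ((C \ {c}) ∪ D) (embedRel D c r s) X := by
  rintro x hx x' hx' a ⟨-, haX⟩
  by_cases haD : a ∈ D
  · simp only [embedRel, collapseTo_of_mem (hX hx), collapseTo_of_mem (hX hx'),
      collapseTo_of_mem haD, hX hx, hX hx', haD, true_and]
    exact or_congr_right (h x hx x' hx' a ⟨haD, haX⟩)
  · rw [embedRel_of_notMem_right haD, embedRel_of_notMem_right haD, collapseTo_of_mem (hX hx),
      collapseTo_of_mem (hX hx')]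

lemma IsCloneFor.embedRel_of_mem (h : IsCloneFor C r Z) (hcZ : c ∈ Z) :
    IsCloneFor ((C \ {c}) ∪ D) (embedRel D c r s) ((Z \ {c}) ∪ D) := by
  rintro x hx x' hx' a ⟨ha, haX⟩
  have haD : a ∉ D := fun h => haX (Or.inr h)
  have haC := ha.resolve_right haD
  rw [embedRel_of_notMem_right haD, embedRel_of_notMem_right haD, collapseTo_of_notMem haD]
  exact h _ (collapseTo_mem hcZ hx) _ (collapseTo_mem hcZ hx') a
    ⟨haC.1, fun h => haX (Or.inl ⟨h, haC.2⟩)⟩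

lemma IsCloneFor.embedRel_of_notMem (h : IsCloneFor C r Z) (hc : c ∈ C) (hdisj : Disjoint C D)
    (hZC : Z ⊆ C) (hcZ : c ∉ Z) : IsCloneFor ((C \ {c}) ∪ D) (embedRel D c r s) Z := by
  rintro x hx x' hx' a ⟨ha, haZ⟩
  have hxD := hdisj.notMem_of_mem_left (hZC hx)
  have hx'D := hdisj.notMem_of_mem_left (hZC hx')
  rw [embedRel_of_notMem_left hxD, embedRel_of_notMem_left hx'D, collapseTo_of_notMem hxD,
    collapseTo_of_notMem hx'D]
  refine h x hx x' hx' _ ⟨collapseTo_mem hc ha, ?_⟩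
  by_cases haD : a ∈ D
  · simpa [haD] using hcZ
  · simpa [haD] using haZ

lemma IsCloneFor.of_embedRel_of_subset (h : IsCloneFor ((C \ {c}) ∪ D) (embedRel D c r s) X)
    (hr : ¬ r c c) (hX : X ⊆ D) : IsCloneFor D s X := by
  rintro x hx x' hx' a ⟨haD, haX⟩
  rw [← embedRel_of_mem_of_mem (s := s) hr (hX hx) haD,
    ← embedRel_of_mem_of_mem (s := s) hr (hX hx') haD]
  exact h x hx x' hx' a ⟨Or.inr haD, haX⟩

lemma subset_of_isCloneFor_embedRel (h : IsCloneFor ((C \ {c}) ∪ D) (embedRel D c r s) X)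
    (h' : IsCloneFor ((C \ {c}) ∪ D) (embedRel D c r (flip s)) X) (hr : ¬ r c c)
    (hs : IsLinOn D s) (hx : x ∈ X) (hxD : x ∉ D) (hd : d ∈ X) (hdD : d ∈ D) : D ⊆ X := by
  intro e heD
  by_contra heX
  have hde : d ≠ e := fun h => heX (h ▸ hd)
  have h₁ := h x hx d hd e ⟨Or.inr heD, heX⟩
  have h₂ := h' x hx d hd e ⟨Or.inr heD, heX⟩
  rw [embedRel_of_notMem_left hxD, embedRel_of_mem_of_mem hr hdD heD] at h₁
  rw [embedRel_of_notMem_left hxD, embedRel_of_mem_of_mem hr hdD heD] at h₂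
  exact iff_not_self ((h₁.symm.trans h₂).trans (hs.rel_iff_not_rel heD hdD hde.symm))

lemma IsCloneFor.of_embedRel_of_supset (h : IsCloneFor ((C \ {c}) ∪ D) (embedRel D c r s) X)
    (hdisj : Disjoint C D) (hDX : D ⊆ X) (hd : d ∈ D) : IsCloneFor C r ((X \ D) ∪ {c}) := by
  have hcollapse : ∀ w ∈ (X \ D) ∪ {c}, ∃ u ∈ X, collapseTo D c u = w := by
    rintro w (⟨hwX, hwD⟩ | hw)
    · exact ⟨w, hwX, collapseTo_of_notMem hwD⟩
    · exact ⟨d, hDX hd, by rw [collapseTo_of_mem hd, Set.eq_of_mem_singleton hw]⟩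
  rintro w hw w' hw' a ⟨haC, haZ⟩
  obtain ⟨u, hu, rfl⟩ := hcollapse w hw
  obtain ⟨u', hu', rfl⟩ := hcollapse w' hw'
  have haD : a ∉ D := hdisj.notMem_of_mem_left haC
  have hac : a ≠ c := fun h => haZ (Or.inr h)
  have haX : a ∉ X := fun h => haZ (Or.inl ⟨h, haD⟩)
  have := h u hu u' hu' a ⟨Or.inl ⟨haC, hac⟩, haX⟩
  rwa [embedRel_of_notMem_right haD, embedRel_of_notMem_right haD, collapseTo_of_notMem haD] at this

lemma IsCloneFor.of_embedRel_of_disjoint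
    (h : IsCloneFor ((C \ {c}) ∪ D) (embedRel D c r s) X) (hdisj : Disjoint C D)
    (hXD : Disjoint X D) (hd : d ∈ D) : IsCloneFor C r X := by
  rintro x hx x' hx' a ⟨haC, haX⟩
  have hxD := hXD.notMem_of_mem_left hx
  have hx'D := hXD.notMem_of_mem_left hx'
  obtain ⟨a', ha', rfl⟩ : ∃ a' ∈ ((C \ {c}) ∪ D) \ X, collapseTo D c a' = a := by
    by_cases hac : a = c
    · exact ⟨d, ⟨Or.inr hd, hXD.notMem_of_mem_right hd⟩, by rw [collapseTo_of_mem hd, hac]⟩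
    · have haD := hdisj.notMem_of_mem_left haC
      exact ⟨a, ⟨Or.inl ⟨haC, hac⟩, haX⟩, collapseTo_of_notMem haD⟩
  have := h x hx x' hx' a' ha'
  rwa [embedRel_of_notMem_left hxD, embedRel_of_notMem_left hx'D, collapseTo_of_notMem hxD,
    collapseTo_of_notMem hx'D] at this

end IsCloneFor

section EmbedProfile

variable {C D : Set α} {c : α} {n m : ℕ} {R : Fin n → α → α → Prop}
    {S : Fin m → α → α → Prop}

lemma embedFamily_subset_commonCloneSets (hc : c ∈ C) (hdisj : Disjoint C D)
    (hDne : D.Nonempty) (hS : ∀ j, IsLinOn D (S j)) :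
    embedFamily (cloneSets C R) c D (cloneSets D S) ⊆
      commonCloneSets ((C \ {c}) ∪ D) (embedProfile D c R S) := by
  rintro X (hX | ⟨Z, hZ, ⟨hcZ, rfl⟩ | ⟨hcZ, rfl⟩⟩)
  · obtain ⟨hne, hXD, hXS⟩ := mem_cloneSets_iff.mp hX
    refine ⟨hne, hXD.trans Set.subset_union_right, fun ⟨i, j, b⟩ => ?_⟩
    cases b
    · exact (hXS j).embedRel_of_subset hXD
    · exact ((hXS j).flip (hS j) hXD).embedRel_of_subset hXD
  · obtain ⟨-, hZC, hZR⟩ := mem_cloneSets_iff.mp hZ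
    exact ⟨hDne.mono Set.subset_union_right,
      Set.union_subset_union_left _ (Set.sdiff_subset_sdiff_left hZC),
      fun v => (hZR v.1).embedRel_of_mem hcZ⟩
  · obtain ⟨hne, hZC, hZR⟩ := mem_cloneSets_iff.mp hZ
    exact ⟨hne, fun z hz => Or.inl ⟨hZC hz, fun h => hcZ (h ▸ hz)⟩,
      fun v => (hZR v.1).embedRel_of_notMem hc hdisj hZC hcZ⟩

lemma commonCloneSets_subset_embedFamily (hc : c ∈ C) (hdisj : Disjoint C D)
    (hDne : D.Nonempty) (hR : IsProfile C R) (hS : IsProfile D S) :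
    commonCloneSets ((C \ {c}) ∪ D) (embedProfile D c R S) ⊆
      embedFamily (cloneSets C R) c D (cloneSets D S) := by
  rintro X ⟨hne, hXC', hX⟩
  obtain ⟨hn, hR⟩ := hR
  obtain ⟨hm, hS⟩ := hS
  have hrcc : ∀ i, ¬ R i c c := fun i => (hR i).1 c hc
  let i₀ : Fin n := ⟨0, hn⟩
  let j₀ : Fin m := ⟨0, hm⟩
  by_cases hXD : X ⊆ D
  · exact Or.inl (mem_cloneSets_iff.mpr
      ⟨hne, hXD, fun j => (hX (i₀, j, false)).of_embedRel_of_subset (hrcc i₀) hXD⟩)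
  obtain ⟨x, hx, hxD⟩ := Set.not_subset.mp hXD
  have hcX : c ∉ X := fun h => (hXC' h).elim (fun h => h.2 rfl) (hdisj.notMem_of_mem_left hc)
  right
  rcases (X ∩ D).eq_empty_or_nonempty with hXD' | ⟨d, hd, hdD⟩
  · refine ⟨X, mem_cloneSets_iff.mpr ⟨hne, ?_, fun i => ?_⟩, Or.inr ⟨hcX, rfl⟩⟩
    · exact fun z hz => ((hXC' hz).resolve_right fun h => hXD'.subset ⟨hz, h⟩).1
    · exact (hX (i, j₀, false)).of_embedRel_of_disjoint hdisj
        (Set.disjoint_iff_inter_eq_empty.mpr hXD') hDne.some_mem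
  · have hDX : D ⊆ X := subset_of_isCloneFor_embedRel (hX (i₀, j₀, false))
      (hX (i₀, j₀, true)) (hrcc i₀) (hS j₀) hx hxD hd hdD
    refine ⟨(X \ D) ∪ {c}, mem_cloneSets_iff.mpr ⟨⟨c, Or.inr rfl⟩, ?_, fun i => ?_⟩,
      Or.inl ⟨Or.inr rfl, ?_⟩⟩
    · exact Set.union_subset (fun z hz => ((hXC' hz.1).resolve_right hz.2).1)
        (Set.singleton_subset_iff.mpr hc)
    · exact (hX (i, j₀, false)).of_embedRel_of_supset hdisj hDX hdD
    · ext y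
      by_cases hyD : y ∈ D
      · simp [hyD, hDX hyD]
      · simpa [hyD] using fun hy (hyc : y = c) => hcX (hyc ▸ hy)

end EmbedProfile

theorem embedFamily_clone_structure_general (C D : Set α)
    (hDne : D.Nonempty) (hdisj : Disjoint C D) (𝓒 𝓓 : Set (Set α))
    (h𝓒 : IsCloneStructure C 𝓒) (h𝓓 : IsCloneStructure D 𝓓)
    (c : α) (hc : c ∈ C) :
    IsCloneStructure ((C \ {c}) ∪ D) (embedFamily 𝓒 c D 𝓓) := by
  obtain ⟨n, R, hR, rfl⟩ := h𝓒
  obtain ⟨m, S, hS, rfl⟩ := h𝓓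
  have : Nonempty (Fin n) := ⟨⟨0, hR.1⟩⟩
  have : Nonempty (Fin m) := ⟨⟨0, hS.1⟩⟩
  rw [(embedFamily_subset_commonCloneSets hc hdisj hDne hS.2).antisymm
    (commonCloneSets_subset_embedFamily hc hdisj hDne hR hS)]
  exact isCloneStructure_commonCloneSets (isLinOn_embedProfile hc hR.2 hS.2)

theorem embedFamily_clone_structure (C D : Set α) (hC : C.Finite) (hD : D.Finite)
    (hDne : D.Nonempty) (hdisj : Disjoint C D) (𝓒 𝓓 : Set (Set α))
    (h𝓒 : IsCloneStructure C 𝓒) (h𝓓 : IsCloneStructure D 𝓓)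
    (c : α) (hc : c ∈ C) :
    IsCloneStructure ((C \ {c}) ∪ D) (embedFamily 𝓒 c D 𝓓) :=
  embedFamily_clone_structure_general C D hDne hdisj 𝓒 𝓓 h𝓒 h𝓓 c hc
end
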